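/- (Blindness of score matching to mixing proportions.) Fix μ₁ ∈ ℝ, σ > 0 and two mixing proportions π, π' ∈ (0,1) with π ≠ π'. Writing p_{μ₂,π}(x) = π φ_{μ₁,σ}(x) + (1−π) φ_{μ₂,σ}(x), the Fisher divergence between the two mixtures that differ only in their mixing proportion vanishes in the limit of separated components: J(p_{μ₂,π} ‖ p_{μ₂,π'}) → 0 as μ₂ → +∞. -/

import Mathlib

open MeasureTheory Filter

/-- Gaussian density with mean `μ` and standard deviation `σ`. -/
noncomputable def gaussian (μ σ : ℝ) (x : ℝ) : ℝ :=
  (σ * Real.sqrt (2 * Real.pi))⁻¹ * Real.exp (-(x - μ) ^ 2 / (2 * σ ^ 2))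

/-- The score of a density `ρ`: the derivative of its log. -/
noncomputable def score (ρ : ℝ → ℝ) (x : ℝ) : ℝ :=
  deriv (fun y => Real.log (ρ y)) x

/-- Fisher divergence between densities `q` and `p`. -/
noncomputable def fisherDiv (q p : ℝ → ℝ) : ℝ :=
  ∫ x : ℝ, q x * (score q x - score p x) ^ 2

/-!
For `q = a φ₁ + (1 - a) φ₂` and `p = b φ₁ + (1 - b) φ₂` with component scores `s₁, s₂`, the
score difference is `s_q - s_p = (a - b) (s₁ - s₂) φ₁ φ₂ / (q p)`, and for two Gaussians of equal
width `s₁ - s₂ = (μ₁ - μ₂) / σ²` is constant. By AM-GM both `q` and `p` dominate multiples of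
`√(φ₁ φ₂)`, so the Fisher integrand is at most a constant times `(μ₂ - μ₁)² √(φ₁ φ₂)`. The
Bhattacharyya coefficient `∫ √(φ₁ φ₂) = exp (-(μ₂ - μ₁)² / (8 σ²))` then beats the quadratic factor.
-/

open Real ProbabilityTheory

lemma score_eq_of_hasDerivAt {ρ : ℝ → ℝ} {d x : ℝ} (h : HasDerivAt ρ d x) (hx : ρ x ≠ 0) :
    score ρ x = d / ρ x :=
  (h.log hx).deriv

lemma fisherDiv_nonneg {q : ℝ → ℝ} (hq : ∀ x, 0 ≤ q x) (p : ℝ → ℝ) : 0 ≤ fisherDiv q p :=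
  integral_nonneg fun x => mul_nonneg (hq x) (sq_nonneg _)

lemma mixture_score_sub {a b g₁ g₂ s₁ s₂ : ℝ} (hq : a * g₁ + (1 - a) * g₂ ≠ 0)
    (hp : b * g₁ + (1 - b) * g₂ ≠ 0) :
    (a * (s₁ * g₁) + (1 - a) * (s₂ * g₂)) / (a * g₁ + (1 - a) * g₂)
        - (b * (s₁ * g₁) + (1 - b) * (s₂ * g₂)) / (b * g₁ + (1 - b) * g₂)
      = (a - b) * (s₁ - s₂) * (g₁ * g₂) / ((a * g₁ + (1 - a) * g₂) * (b * g₁ + (1 - b) * g₂)) := by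
  rw [div_sub_div _ _ hq hp]
  congr 1
  ring

lemma four_mul_mul_le_mixture_sq (a g₁ g₂ : ℝ) :
    4 * (a * (1 - a)) * (g₁ * g₂) ≤ (a * g₁ + (1 - a) * g₂) ^ 2 := by
  nlinarith [sq_nonneg (a * g₁ - (1 - a) * g₂)]

lemma two_sqrt_mul_le_mixture {a g₁ g₂ : ℝ} (ha : a ∈ Set.Icc (0 : ℝ) 1) (hg₁ : 0 ≤ g₁)
    (hg₂ : 0 ≤ g₂) : 2 * √(a * (1 - a)) * √(g₁ * g₂) ≤ a * g₁ + (1 - a) * g₂ := by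
  obtain ⟨ha₀, ha₁⟩ := ha
  have hq : 0 ≤ a * g₁ + (1 - a) * g₂ := by have := sub_nonneg.2 ha₁; positivity
  rw [← sqrt_sq hq, show (2 : ℝ) = √(2 ^ 2) from (sqrt_sq zero_le_two).symm,
    ← sqrt_mul (by positivity), ← sqrt_mul (by positivity)]
  exact sqrt_le_sqrt (by linarith [four_mul_mul_le_mixture_sq a g₁ g₂])

lemma mixture_mul_sq_score_sub_le {a b g₁ g₂ s₁ s₂ : ℝ} (ha : a ∈ Set.Ioo (0 : ℝ) 1)
    (hb : b ∈ Set.Ioo (0 : ℝ) 1) (hg₁ : 0 < g₁) (hg₂ : 0 < g₂) :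
    (a * g₁ + (1 - a) * g₂) * ((a * (s₁ * g₁) + (1 - a) * (s₂ * g₂)) / (a * g₁ + (1 - a) * g₂)
        - (b * (s₁ * g₁) + (1 - b) * (s₂ * g₂)) / (b * g₁ + (1 - b) * g₂)) ^ 2
      ≤ (a - b) ^ 2 * (s₁ - s₂) ^ 2 / (8 * √(a * (1 - a)) * (b * (1 - b))) * √(g₁ * g₂) := by
  obtain ⟨ha₀, ha₁⟩ := ha
  obtain ⟨hb₀, hb₁⟩ := hb
  have hq : 0 < a * g₁ + (1 - a) * g₂ := by nlinarith
  have hp : 0 < b * g₁ + (1 - b) * g₂ := by nlinarith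
  rw [mixture_score_sub hq.ne' hp.ne']
  set q := a * g₁ + (1 - a) * g₂
  set p := b * g₁ + (1 - b) * g₂
  set h := √(g₁ * g₂)
  have hh2 : h ^ 2 = g₁ * g₂ := sq_sqrt (mul_pos hg₁ hg₂).le
  have hq' : 2 * √(a * (1 - a)) * h ≤ q :=
    two_sqrt_mul_le_mixture ⟨ha₀.le, ha₁.le⟩ hg₁.le hg₂.le
  have hp' : 4 * (b * (1 - b)) * h ^ 2 ≤ p ^ 2 := hh2 ▸ four_mul_mul_le_mixture_sq b g₁ g₂
  calc q * ((a - b) * (s₁ - s₂) * (g₁ * g₂) / (q * p)) ^ 2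
      = (a - b) ^ 2 * (s₁ - s₂) ^ 2 * (h ^ 4 / (q * p ^ 2)) := by
        rw [← hh2]; field_simp
    _ ≤ (a - b) ^ 2 * (s₁ - s₂) ^ 2
          * (h ^ 4 / ((2 * √(a * (1 - a)) * h) * (4 * (b * (1 - b)) * h ^ 2))) := by
        gcongr
    _ = (a - b) ^ 2 * (s₁ - s₂) ^ 2 / (8 * √(a * (1 - a)) * (b * (1 - b))) * h := by
        field_simp
        ring

lemma tendsto_sq_mul_exp_neg_sq_div_atTop (t₀ : ℝ) {c : ℝ} (hc : 0 < c) :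
    Tendsto (fun t => (t - t₀) ^ 2 * exp (-(t - t₀) ^ 2 / c)) atTop (nhds 0) := by
  have hshift : Tendsto (fun t : ℝ => t - t₀) atTop atTop :=
    tendsto_atTop_atTop.2 fun b => ⟨b + t₀, fun t ht => by linarith⟩
  have hu : Tendsto (fun t : ℝ => (t - t₀) ^ 2 / c) atTop atTop :=
    ((tendsto_pow_atTop two_ne_zero).comp hshift).atTop_div_const hc
  convert ((tendsto_pow_mul_exp_neg_atTop_nhds_zero 1).comp hu).const_mul c using 2 with t
  · simp only [Function.comp_apply, pow_one, neg_div]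
    field_simp
  · rw [mul_zero]

lemma gaussian_eq_gaussianPDFReal (μ : ℝ) {σ : ℝ} (hσ : 0 < σ) :
    gaussian μ σ = gaussianPDFReal μ (σ ^ 2).toNNReal := by
  ext x
  rw [gaussian, gaussianPDFReal, Real.coe_toNNReal _ (sq_nonneg σ), mul_comm σ,
    sqrt_mul' _ (sq_nonneg σ), sqrt_sq hσ.le]

lemma gaussian_pos (μ : ℝ) {σ : ℝ} (hσ : 0 < σ) (x : ℝ) : 0 < gaussian μ σ x := by
  rw [gaussian_eq_gaussianPDFReal μ hσ]
  exact gaussianPDFReal_pos _ _ _ (by positivity)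

lemma integrable_gaussian (μ : ℝ) {σ : ℝ} (hσ : 0 < σ) : Integrable (gaussian μ σ) := by
  rw [gaussian_eq_gaussianPDFReal μ hσ]
  exact integrable_gaussianPDFReal _ _

lemma integral_gaussian_eq_one (μ : ℝ) {σ : ℝ} (hσ : 0 < σ) : ∫ x, gaussian μ σ x = 1 := by
  rw [gaussian_eq_gaussianPDFReal μ hσ]
  exact integral_gaussianPDFReal_eq_one _ (by positivity)

lemma hasDerivAt_gaussian (μ σ x : ℝ) :
    HasDerivAt (gaussian μ σ) (-(x - μ) / σ ^ 2 * gaussian μ σ x) x := by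
  have h : HasDerivAt (fun y => -(y - μ) ^ 2 / (2 * σ ^ 2)) (-(x - μ) / σ ^ 2) x := by
    refine ((((hasDerivAt_id' x).sub_const μ).fun_pow 2).fun_neg.div_const _).congr_deriv ?_
    norm_num
    ring
  exact (h.exp.const_mul _).congr_deriv (by rw [gaussian]; ring)

lemma sqrt_gaussian_mul_gaussian (μ₁ μ₂ : ℝ) {σ : ℝ} (hσ : 0 < σ) (x : ℝ) :
    √(gaussian μ₁ σ x * gaussian μ₂ σ x)
      = exp (-(μ₂ - μ₁) ^ 2 / (8 * σ ^ 2)) * gaussian ((μ₁ + μ₂) / 2) σ x := by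
  rw [sqrt_eq_iff_mul_self_eq_of_pos (mul_pos (exp_pos _) (gaussian_pos _ hσ x))]
  have hexp : -(μ₂ - μ₁) ^ 2 / (8 * σ ^ 2) + -(x - (μ₁ + μ₂) / 2) ^ 2 / (2 * σ ^ 2)
        + (-(μ₂ - μ₁) ^ 2 / (8 * σ ^ 2) + -(x - (μ₁ + μ₂) / 2) ^ 2 / (2 * σ ^ 2))
      = -(x - μ₁) ^ 2 / (2 * σ ^ 2) + -(x - μ₂) ^ 2 / (2 * σ ^ 2) := by
    field_simp
    ring
  unfold gaussian
  have h := congrArg exp hexp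
  simp only [exp_add] at h
  linear_combination (σ * √(2 * π))⁻¹ ^ 2 * h

noncomputable def gaussianMixture (w μ₁ μ₂ σ x : ℝ) : ℝ :=
  w * gaussian μ₁ σ x + (1 - w) * gaussian μ₂ σ x

lemma gaussianMixture_pos {w : ℝ} (hw : w ∈ Set.Icc (0 : ℝ) 1) (μ₁ μ₂ : ℝ) {σ : ℝ} (hσ : 0 < σ)
    (x : ℝ) : 0 < gaussianMixture w μ₁ μ₂ σ x := by
  have h₁ := gaussian_pos μ₁ hσ x
  have h₂ := gaussian_pos μ₂ hσ x
  rw [gaussianMixture]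
  nlinarith [mul_le_mul_of_nonneg_left (min_le_left (gaussian μ₁ σ x) (gaussian μ₂ σ x)) hw.1,
    mul_le_mul_of_nonneg_left (min_le_right (gaussian μ₁ σ x) (gaussian μ₂ σ x))
      (sub_nonneg.2 hw.2)]

lemma score_gaussianMixture {w : ℝ} (hw : w ∈ Set.Icc (0 : ℝ) 1) (μ₁ μ₂ : ℝ) {σ : ℝ}
    (hσ : 0 < σ) (x : ℝ) :
    score (gaussianMixture w μ₁ μ₂ σ) x
      = (w * (-(x - μ₁) / σ ^ 2 * gaussian μ₁ σ x)
          + (1 - w) * (-(x - μ₂) / σ ^ 2 * gaussian μ₂ σ x)) / gaussianMixture w μ₁ μ₂ σ x :=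
  score_eq_of_hasDerivAt (((hasDerivAt_gaussian μ₁ σ x).const_mul w).add
    ((hasDerivAt_gaussian μ₂ σ x).const_mul (1 - w))) (gaussianMixture_pos hw μ₁ μ₂ hσ x).ne'

lemma fisherDiv_gaussianMixture_le {a b : ℝ} (ha : a ∈ Set.Ioo (0 : ℝ) 1)
    (hb : b ∈ Set.Ioo (0 : ℝ) 1) (μ₁ μ₂ : ℝ) {σ : ℝ} (hσ : 0 < σ) :
    fisherDiv (gaussianMixture a μ₁ μ₂ σ) (gaussianMixture b μ₁ μ₂ σ)
      ≤ (a - b) ^ 2 / (8 * √(a * (1 - a)) * (b * (1 - b))) / σ ^ 4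
        * ((μ₂ - μ₁) ^ 2 * exp (-(μ₂ - μ₁) ^ 2 / (8 * σ ^ 2))) := by
  set K := (a - b) ^ 2 * ((μ₁ - μ₂) / σ ^ 2) ^ 2 / (8 * √(a * (1 - a)) * (b * (1 - b))) with hK
  set E := exp (-(μ₂ - μ₁) ^ 2 / (8 * σ ^ 2))
  have hpointwise : ∀ x, gaussianMixture a μ₁ μ₂ σ x
      * (score (gaussianMixture a μ₁ μ₂ σ) x - score (gaussianMixture b μ₁ μ₂ σ) x) ^ 2
      ≤ K * (E * gaussian ((μ₁ + μ₂) / 2) σ x) := by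
    intro x
    rw [score_gaussianMixture ⟨ha.1.le, ha.2.le⟩ μ₁ μ₂ hσ x,
      score_gaussianMixture ⟨hb.1.le, hb.2.le⟩ μ₁ μ₂ hσ x, ← sqrt_gaussian_mul_gaussian μ₁ μ₂ hσ]
    refine (mixture_mul_sq_score_sub_le ha hb (gaussian_pos μ₁ hσ x)
      (gaussian_pos μ₂ hσ x)).trans_eq ?_
    ring
  calc fisherDiv (gaussianMixture a μ₁ μ₂ σ) (gaussianMixture b μ₁ μ₂ σ)
      ≤ ∫ x, K * (E * gaussian ((μ₁ + μ₂) / 2) σ x) :=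
        integral_mono_of_nonneg (ae_of_all _ fun x => mul_nonneg
            (gaussianMixture_pos ⟨ha.1.le, ha.2.le⟩ μ₁ μ₂ hσ x).le (sq_nonneg _))
          (((integrable_gaussian _ hσ).const_mul E).const_mul K) (ae_of_all _ hpointwise)
    _ = K * E := by
        rw [integral_const_mul, integral_const_mul, integral_gaussian_eq_one _ hσ, mul_one]
    _ = _ := by
        rw [hK]
        ring

theorem fisher_blind_to_proportions_separation_general (μ₁ σ w w' : ℝ) (hσ : 0 < σ)
    (hw : w ∈ Set.Ioo (0 : ℝ) 1) (hw' : w' ∈ Set.Ioo (0 : ℝ) 1) :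
    Tendsto
      (fun μ₂ => fisherDiv
        (fun y => w * gaussian μ₁ σ y + (1 - w) * gaussian μ₂ σ y)
        (fun y => w' * gaussian μ₁ σ y + (1 - w') * gaussian μ₂ σ y))
      atTop (nhds 0) := by
  have hbound := (tendsto_sq_mul_exp_neg_sq_div_atTop μ₁ (by positivity : 0 < 8 * σ ^ 2)).const_mul
    ((w - w') ^ 2 / (8 * √(w * (1 - w)) * (w' * (1 - w'))) / σ ^ 4)
  rw [mul_zero] at hbound
  exact tendsto_of_tendsto_of_tendsto_of_le_of_le tendsto_const_nhds hbound
    (fun μ₂ => fisherDiv_nonneg (fun x => (gaussianMixture_pos ⟨hw.1.le, hw.2.le⟩ μ₁ μ₂ hσ x).le) _)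
    (fun μ₂ => fisherDiv_gaussianMixture_le hw hw' μ₁ μ₂ hσ)

/-- blindness of score matching to mixing proportions, separated
components limit: the Fisher divergence between two mixtures that differ only in
their mixing proportion vanishes as `μ₂ → +∞`. -/
theorem fisher_blind_to_proportions_separation (μ₁ σ w w' : ℝ) (hσ : 0 < σ)
    (hw : w ∈ Set.Ioo (0 : ℝ) 1) (hw' : w' ∈ Set.Ioo (0 : ℝ) 1) (hne : w ≠ w') :
    Tendsto
      (fun μ₂ => fisherDiv
        (fun y => w * gaussian μ₁ σ y + (1 - w) * gaussian μ₂ σ y)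
        (fun y => w' * gaussian μ₁ σ y + (1 - w') * gaussian μ₂ σ y))
      atTop (nhds 0) :=
  fisher_blind_to_proportions_separation_general μ₁ σ w w' hσ hw hw'
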